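/- arXiv:1401.4642 — 3 statements merged into one kernel-verified Lean document; each statement's English description precedes it below -/
import Mathlib

section
/- If two codewords x1, x2 are chosen independently and uniformly at random (with replacement) from a code C ⊆ F_2^n, then the expected Hamming distance E[d_H(x1,x2)] ≤ n/2. -/
open Finset

lemma zmod2_cases : ∀ v : ZMod 2, v = 0 ∨ v = 1 := by decide

lemma coord_bound {n : ℕ} (C : Finset (Fin n → ZMod 2)) (i : Fin n) :
    ∑ x ∈ C, ∑ y ∈ C, (if x i ≠ y i then (1:ℝ) else 0) ≤ (C.card : ℝ) ^ 2 / 2 := by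
  classical
  set a : ℕ := (C.filter fun x => x i = 0).card with ha
  set b : ℕ := (C.filter fun x => ¬ x i = 0).card with hb
  have hab : a + b = C.card := Finset.card_filter_add_card_filter_not _
  have hinner : ∀ x ∈ C, ∑ y ∈ C, (if x i ≠ y i then (1:ℝ) else 0)
      = if x i = 0 then (b : ℝ) else (a : ℝ) := by
    intro x hx
    rw [Finset.sum_boole]
    by_cases h : x i = 0
    · simp only [h, if_pos]
      congr 2
      apply Finset.filter_congr
      intro y _
      have : ∀ u : ZMod 2, ((0 : ZMod 2) ≠ u ↔ ¬ u = 0) := by decide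
      simp [h, this]
    · simp only [h, if_neg, not_false_iff]
      congr 2
      apply Finset.filter_congr
      intro y _
      have : ∀ u v : ZMod 2, ¬ u = 0 → (u ≠ v ↔ v = 0) := by decide
      simp [this _ _ h]
  rw [Finset.sum_congr rfl hinner]
  rw [Finset.sum_ite, Finset.sum_const, Finset.sum_const]
  have h1 : (C.filter fun x => x i = 0).card = a := rfl
  have h2 : (C.filter fun x => ¬ x i = 0).card = b := rfl
  rw [h1, h2]
  have : (C.card : ℝ) = (a : ℝ) + (b : ℝ) := by
    rw [← hab]; push_cast; ring
  rw [this]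
  simp only [nsmul_eq_mul]
  nlinarith [sq_nonneg ((a : ℝ) - b)]

/-- Plotkin averaging bound: the expected Hamming distance between two codewords chosen
independently and uniformly at random (with replacement) from a nonempty code `C ⊆ 𝔽₂ⁿ`
is at most `n/2`. -/
theorem expected_hammingDist_le (n : ℕ) (C : Finset (Fin n → ZMod 2)) (hC : C.Nonempty) :
    (∑ p ∈ C ×ˢ C, (hammingDist p.1 p.2 : ℝ)) / (C.card : ℝ) ^ 2 ≤ n / 2 := by
  classical
  have hcard : (0 : ℝ) < (C.card : ℝ) ^ 2 := by
    have := hC.card_pos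
    positivity
  rw [div_le_iff₀ hcard]
  have hd : ∀ x y : Fin n → ZMod 2, ((hammingDist x y : ℕ) : ℝ)
      = ∑ i : Fin n, (if x i ≠ y i then (1:ℝ) else 0) := by
    intro x y
    rw [hammingDist, Finset.sum_boole]
  have key : (∑ p ∈ C ×ˢ C, (hammingDist p.1 p.2 : ℝ))
      = ∑ i : Fin n, ∑ x ∈ C, ∑ y ∈ C, (if x i ≠ y i then (1:ℝ) else 0) := by
    rw [Finset.sum_product]
    simp_rw [hd]
    rw [show (∑ x ∈ C, ∑ y ∈ C, ∑ i : Fin n, (if x i ≠ y i then (1:ℝ) else 0))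
        = ∑ x ∈ C, ∑ i : Fin n, ∑ y ∈ C, (if x i ≠ y i then (1:ℝ) else 0) from
      Finset.sum_congr rfl fun x _ => Finset.sum_comm]
    rw [Finset.sum_comm]
  rw [key]
  calc ∑ i : Fin n, ∑ x ∈ C, ∑ y ∈ C, (if x i ≠ y i then (1:ℝ) else 0)
      ≤ ∑ _i : Fin n, (C.card : ℝ) ^ 2 / 2 :=
        Finset.sum_le_sum fun i _ => coord_bound C i
    _ = n / 2 * (C.card : ℝ) ^ 2 := by
        rw [Finset.sum_const]
        simp
        ring
end

section
/- With the confusion attack of the previous context (adversary picks uniform x ∈ C and randomizes the differing positions), any decoder φ: F_2^n → C has average probability of error at least 1/2 − 1/|C| when the transmitted codeword is uniform on C. -/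
open Finset

/-- The conditional probability of receiving `y` when `c` is transmitted and the adversary
has picked `x` under the confusion attack: coordinates where `x` and `c` agree are left
untouched, coordinates where they differ are flipped independently with probability `1/2`. -/
noncomputable def transProb (n : ℕ) (x c y : Fin n → ZMod 2) : ℝ :=
  if ∀ i, x i = c i → y i = c i then (1 / 2 : ℝ) ^ hammingDist x c else 0

lemma transProb_nonneg (n : ℕ) (x c y : Fin n → ZMod 2) : 0 ≤ transProb n x c y := by
  unfold transProb; split <;> positivity

lemma transProb_eq_prod (n : ℕ) (x c y : Fin n → ZMod 2) :
    transProb n x c y =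
      ∏ i, (if x i = c i then (if y i = c i then (1:ℝ) else 0) else 1/2) := by
  unfold transProb
  by_cases h : ∀ i, x i = c i → y i = c i
  · rw [if_pos h, Finset.prod_ite]
    rw [Finset.prod_eq_one (fun i hi => by
        simp only [mem_filter] at hi; rw [if_pos (h i hi.2)]),
      one_mul, Finset.prod_const, hammingDist]
  · rw [if_neg h]
    push_neg at h
    obtain ⟨i, hxi, hyi⟩ := h
    exact (Finset.prod_eq_zero (Finset.mem_univ i) (by rw [if_pos hxi, if_neg hyi])).symm

lemma sum_transProb (n : ℕ) (x c : Fin n → ZMod 2) :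
    ∑ y : Fin n → ZMod 2, transProb n x c y = 1 := by
  simp only [transProb_eq_prod]
  rw [← Fintype.prod_sum (fun i t => if x i = c i then (if t = c i then (1:ℝ) else 0) else 1/2)]
  apply Finset.prod_eq_one
  intro i _
  by_cases h : x i = c i
  · simp [h]
  · simp only [h, if_false]
    rw [Finset.sum_const, Finset.card_univ]
    norm_num [ZMod.card]

lemma transProb_symm (n : ℕ) (x c y : Fin n → ZMod 2) :
    transProb n x c y = transProb n c x y := by
  unfold transProb
  rw [hammingDist_comm]
  congr 1
  simp only [eq_iff_iff]
  constructor
  · intro h i hic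
    exact (h i hic.symm).trans hic
  · intro h i hic
    exact (h i hic.symm).trans hic

/-- Under the confusion attack (the adversary picks a uniform codeword `x ∈ C` and
randomizes the positions where `x` differs from the transmitted codeword `c`, itself
uniform on `C`), every decoder `φ` has average probability of error at least
`1/2 − 1/|C|`. -/
theorem confusion_attack_error (n : ℕ) (C : Finset (Fin n → ZMod 2)) (hC : 2 ≤ C.card)
    (φ : (Fin n → ZMod 2) → (Fin n → ZMod 2)) :
    1 / 2 - 1 / (C.card : ℝ) ≤
      (1 / (C.card : ℝ) ^ 2) * ∑ c ∈ C, ∑ x ∈ C,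
        ∑ y : Fin n → ZMod 2, transProb n x c y * (if φ y ≠ c then 1 else 0) := by
  set M : ℝ := (C.card : ℝ) with hM
  have hM2 : (2:ℝ) ≤ M := by rw [hM]; exact_mod_cast hC
  have hMpos : (0:ℝ) < M := by linarith
  set S := ∑ c ∈ C, ∑ x ∈ C,
      ∑ y : Fin n → ZMod 2, transProb n x c y * (if φ y ≠ c then 1 else 0) with hS
  have hswap : S = ∑ c ∈ C, ∑ x ∈ C,
      ∑ y : Fin n → ZMod 2, transProb n x c y * (if φ y ≠ x then 1 else 0) := by
    rw [hS, Finset.sum_comm]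
    refine Finset.sum_congr rfl fun c _ => Finset.sum_congr rfl fun x _ =>
      Finset.sum_congr rfl fun y _ => ?_
    rw [transProb_symm]
  have card_eq : M ^ 2 - M = ∑ c ∈ C, ∑ x ∈ C, (if c = x then (0:ℝ) else 1) := by
    have : ∀ c ∈ C, ∑ x ∈ C, (if c = x then (0:ℝ) else 1) = M - 1 := by
      intro c hc
      have : ∑ x ∈ C, (if c = x then (0:ℝ) else 1)
          = ∑ x ∈ C, ((1:ℝ) - if c = x then 1 else 0) := by
        apply Finset.sum_congr rfl; intro x _; split <;> norm_num
      rw [this, Finset.sum_sub_distrib, Finset.sum_const, Finset.sum_ite_eq C c (fun _ => (1:ℝ)),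
        if_pos hc]
      simp [hM]
    rw [Finset.sum_congr rfl this, Finset.sum_const]
    simp only [nsmul_eq_mul, ← hM]
    ring
  have key : M ^ 2 - M ≤ 2 * S := by
    rw [two_mul, card_eq]
    nth_rewrite 2 [hswap]
    rw [hS, ← Finset.sum_add_distrib]
    apply Finset.sum_le_sum
    intro c hc
    rw [← Finset.sum_add_distrib]
    apply Finset.sum_le_sum
    intro x hx
    rw [← Finset.sum_add_distrib]
    by_cases hcx : c = x
    · rw [if_pos hcx]
      apply Finset.sum_nonneg
      intro y _
      have := transProb_nonneg n x c y
      have h1 : (0:ℝ) ≤ (if φ y ≠ c then (1:ℝ) else 0) := by split <;> norm_num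
      have h2 : (0:ℝ) ≤ (if φ y ≠ x then (1:ℝ) else 0) := by split <;> norm_num
      nlinarith
    · rw [if_neg hcx]
      refine le_trans (le_of_eq (sum_transProb n x c).symm) (Finset.sum_le_sum fun y _ => ?_)
      have hab : (1:ℝ) ≤ (if φ y ≠ c then (1:ℝ) else 0) + (if φ y ≠ x then 1 else 0) := by
        by_cases h1 : φ y = c
        · have h2 : φ y ≠ x := by rw [h1]; exact hcx
          rw [if_neg (by simp [h1]), if_pos h2]; norm_num
        · rw [if_pos h1]
          have h2 : (0:ℝ) ≤ (if φ y ≠ x then (1:ℝ) else 0) := by split <;> norm_num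
          linarith
      calc transProb n x c y = transProb n x c y * 1 := by ring
        _ ≤ transProb n x c y * ((if φ y ≠ c then 1 else 0) + (if φ y ≠ x then 1 else 0)) :=
            mul_le_mul_of_nonneg_left hab (transProb_nonneg n x c y)
        _ = _ := by ring
  have hs : (M ^ 2 - M) / 2 ≤ S := by linarith
  have hM2pos : (0:ℝ) < M ^ 2 := by positivity
  rw [div_mul_eq_mul_div, one_mul, le_div_iff₀ hM2pos]
  have hinv : 1 / M * M = 1 := by field_simp
  nlinarith [hs, hinv, hMpos]
end

section
/- Linear programming bound with a distance-distribution constraint: let C ⊆ F_2^n be a code whose distance distribution satisfies ∑_{w > t} A_w ≥ c|C| for some c ∈ (0,1). Suppose f(x) = ∑_{k=0}^n f_k K_k(x) is a polynomial with f_0 = 1 and f_k ≥ 0 for all k ≥ 1, and there exists β > 0 such that f(j) ≤ cβ for 1 ≤ j ≤ t and f(j) ≤ −(1−c)β for t < j ≤ n. Then |C| ≤ f(0) − cβ. -/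
open Finset

/-- The Krawtchouk polynomial `K_k(j) = ∑_{i=0}^{k} (−1)^i C(j,i) C(n−j, k−i)`, as a real
number. -/
noncomputable def krawtchouk (n k j : ℕ) : ℝ :=
  ∑ i ∈ Finset.range (k + 1), (-1 : ℝ) ^ i * (j.choose i : ℝ) * ((n - j).choose (k - i) : ℝ)

/-- Linear programming bound with a distance-distribution constraint.  Let `C ⊆ 𝔽₂ⁿ` be a
nonempty code with distance distribution `A_w = (1/|C|)|{(c₁,c₂) ∈ C² : d_H(c₁,c₂) = w}|`
satisfying Delsarte's inequalities `∑_w K_j(w) A_w ≥ 0` and the skewness condition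
`∑_{w > t} A_w ≥ c|C|` with `c ∈ (0,1)`.  Suppose `f(x) = ∑_k f_k K_k(x)` has `f₀ = 1`,
`f_k ≥ 0` for `k ≥ 1`, and there is `β > 0` with `f(j) ≤ cβ` for `1 ≤ j ≤ t` and
`f(j) ≤ −(1−c)β` for `t < j ≤ n`.  Then `|C| ≤ f(0) − cβ`. -/
theorem lp_bound_skewed (n t : ℕ) (C : Finset (Fin n → ZMod 2)) (hC : C.Nonempty)
    (A : ℕ → ℝ)
    (hA : ∀ w, A w =
      (((C ×ˢ C).filter (fun p => hammingDist p.1 p.2 = w)).card : ℝ) / (C.card : ℝ))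
    (c : ℝ) (hc0 : 0 < c) (hc1 : c < 1)
    (hskew : c * (C.card : ℝ) ≤ ∑ w ∈ (Finset.range (n + 1)).filter (fun w => t < w), A w)
    (hdual : ∀ j, j ≤ n → 0 ≤ ∑ w ∈ Finset.range (n + 1), krawtchouk n j w * A w)
    (fc : ℕ → ℝ) (hf0 : fc 0 = 1) (hfk : ∀ k, 1 ≤ k → 0 ≤ fc k)
    (f : ℕ → ℝ) (hf : ∀ j, f j = ∑ k ∈ Finset.range (n + 1), fc k * krawtchouk n k j)
    (β : ℝ) (hβ : 0 < β)
    (hmid : ∀ j, 1 ≤ j → j ≤ t → f j ≤ c * β)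
    (htail : ∀ j, t < j → j ≤ n → f j ≤ -(1 - c) * β) :
    (C.card : ℝ) ≤ f 0 - c * β := by
  have hCpos : (0:ℝ) < C.card := by exact_mod_cast hC.card_pos
  have hAnn : ∀ w, 0 ≤ A w := fun w => by rw [hA]; positivity
  have hk0 : ∀ w, krawtchouk n 0 w = 1 := by
    intro w; simp [krawtchouk]
  -- total sum of A over range (n+1) is |C|
  have hcard : ((C ×ˢ C).card : ℝ) = ∑ w ∈ Finset.range (n+1),
      (((C ×ˢ C).filter (fun p => hammingDist p.1 p.2 = w)).card : ℝ) := by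
    norm_cast
    apply Finset.card_eq_sum_card_fiberwise
    intro p _
    refine Finset.mem_range.2 (Nat.lt_succ_of_le ?_)
    simpa using hammingDist_le_card_fintype (x := p.1) (y := p.2)
  have htot : ∑ w ∈ Finset.range (n+1), A w = C.card := by
    have h1 : ∑ w ∈ Finset.range (n+1), A w = ((C ×ˢ C).card : ℝ) / C.card := by
      simp only [hA]
      rw [← Finset.sum_div, ← hcard]
    rw [h1, Finset.card_product]
    push_cast
    field_simp
  have hA0 : A 0 = 1 := by
    rw [hA]
    have hdiag : (C ×ˢ C).filter (fun p => hammingDist p.1 p.2 = 0) = C.diag := by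
      ext p
      simp only [Finset.mem_filter, Finset.mem_product, Finset.mem_diag,
        hammingDist_eq_zero]
      constructor
      · rintro ⟨⟨h1, h2⟩, h3⟩; exact ⟨h1, h3⟩
      · rintro ⟨h1, h3⟩; exact ⟨⟨h1, h3 ▸ h1⟩, h3⟩
    rw [hdiag, Finset.diag_card]
    field_simp
  set S := ∑ w ∈ Finset.range (n+1), f w * A w with hS
  -- lower bound: |C| ≤ S
  have hlow : (C.card : ℝ) ≤ S := by
    have hswap : S = ∑ k ∈ Finset.range (n+1),
        fc k * ∑ w ∈ Finset.range (n+1), krawtchouk n k w * A w := by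
      rw [hS]
      simp only [hf, Finset.sum_mul, Finset.mul_sum]
      rw [Finset.sum_comm]
      exact Finset.sum_congr rfl fun k _ => Finset.sum_congr rfl fun w _ => by ring
    have h0 : fc 0 * ∑ w ∈ Finset.range (n+1), krawtchouk n 0 w * A w = C.card := by
      simp only [hf0, hk0, one_mul]
      rw [htot]
    rw [hswap, Finset.sum_range_succ', h0]
    have : 0 ≤ ∑ i ∈ Finset.range n,
        fc (i+1) * ∑ w ∈ Finset.range (n+1), krawtchouk n (i+1) w * A w := by
      apply Finset.sum_nonneg
      intro i hi
      exact mul_nonneg (hfk _ (Nat.le_add_left 1 i))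
        (hdual (i+1) (Nat.succ_le_of_lt (Finset.mem_range.1 hi)))
    linarith
  -- upper bound
  set P := (Finset.range (n+1)).filter (fun w => t < w) with hP
  set M := ∑ w ∈ P, A w with hM
  have hMlb : c * (C.card : ℝ) ≤ M := hskew
  have hupper : S ≤ f 0 - c * β + c * β * (C.card : ℝ) - β * M := by
    have h0mem : (0:ℕ) ∈ Finset.range (n+1) := Finset.mem_range.2 (Nat.succ_pos n)
    have hsplit1 : S = f 0 * A 0 + ∑ w ∈ (Finset.range (n+1)).erase 0, f w * A w := by
      rw [hS, ← Finset.add_sum_erase _ _ h0mem]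
    set E := (Finset.range (n+1)).erase 0 with hE
    have hsplit2 : ∑ w ∈ E, f w * A w =
        ∑ w ∈ E.filter (fun w => w ≤ t), f w * A w +
        ∑ w ∈ E.filter (fun w => ¬ w ≤ t), f w * A w :=
      (Finset.sum_filter_add_sum_filter_not E _ _).symm
    have hPE : E.filter (fun w => ¬ w ≤ t) = P := by
      rw [hE, hP]
      ext w
      simp only [Finset.mem_filter, Finset.mem_erase, Finset.mem_range, not_le]
      omega
    -- bound the middle sum
    have hmidb : ∑ w ∈ E.filter (fun w => w ≤ t), f w * A w ≤
        c * β * ∑ w ∈ E.filter (fun w => w ≤ t), A w := by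
      rw [Finset.mul_sum]
      apply Finset.sum_le_sum
      intro w hw
      simp only [hE, Finset.mem_filter, Finset.mem_erase, Finset.mem_range] at hw
      exact mul_le_mul_of_nonneg_right (hmid w (by omega) hw.2) (hAnn w)
    have htailb : ∑ w ∈ P, f w * A w ≤ -(1-c) * β * M := by
      rw [hM, Finset.mul_sum]
      apply Finset.sum_le_sum
      intro w hw
      simp only [hP, Finset.mem_filter, Finset.mem_range] at hw
      exact mul_le_mul_of_nonneg_right (htail w hw.2 (by omega)) (hAnn w)
    -- sum over middle set equals |C| - 1 - M
    have hmidsum : ∑ w ∈ E.filter (fun w => w ≤ t), A w = (C.card : ℝ) - 1 - M := by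
      have h1 : ∑ w ∈ E, A w = (C.card : ℝ) - 1 := by
        have := Finset.add_sum_erase (Finset.range (n+1)) A h0mem
        rw [← hE] at this
        rw [hA0] at this
        linarith [htot ▸ this]
      have h2 : ∑ w ∈ E.filter (fun w => w ≤ t), A w +
          ∑ w ∈ E.filter (fun w => ¬ w ≤ t), A w = ∑ w ∈ E, A w :=
        Finset.sum_filter_add_sum_filter_not E _ _
      rw [hPE] at h2
      rw [← hM] at h2
      linarith
    rw [hsplit1, hsplit2, hPE, hA0]
    have := hmidb
    rw [hmidsum] at this
    nlinarith
  -- combine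
  nlinarith [hMlb, hβ, hupper, hlow]
end
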